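/- arXiv:1111.6991 — 2 statements merged into one kernel-verified Lean document; each statement's English description precedes it below -/
import Mathlib

section
/- Given the maximal regular family Q on A, for each a ∈ A let r(a) be the least element of {q ∈ Q : a ∈ q}; then the relation a ≤ b defined by r(a) ⊆ r(b) is a well-order on A. -/
/-!
Two regular families `P`, `P'` are coherent: of `p ∈ P` and `q ∈ P'` one contains the other, and
the smaller one lies in both families. This goes by a double induction along the well-founded
chains `P` and `P'`, because a member of a regular family is determined by its proper
predecessors. Hence `Q`, the union of all regular families, is itself regular, so the sets `r a`
form a well-ordered chain; and `a ↦ r a` is injective, since `a` is the point that `α` adds to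
the predecessors of `r a`.
-/

open Set

variable {A : Type*}

/-- A family `P` of subsets of `A` is *regular* (w.r.t. the choice-derived map `α`) if:
(1) it is linearly ordered by `⊆`; (2) every nonempty subfamily has a `⊆`-least element;
(3) `∅ ∈ P`; (4) every nonempty `p ∈ P` equals `p₁ ∪ {α p₁}` where `p₁ = ⋃ {q ∈ P : q ⊂ p}`. -/
def RegularFamily (α : Set A → A) (P : Set (Set A)) : Prop :=
  (∀ p ∈ P, ∀ q ∈ P, p ⊆ q ∨ q ⊆ p) ∧
  (∀ γ ⊆ P, γ.Nonempty → ∃ m ∈ γ, ∀ x ∈ γ, m ⊆ x) ∧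
  (∅ ∈ P) ∧
  (∀ p ∈ P, p.Nonempty →
    p = (⋃₀ {q ∈ P | q ⊂ p}) ∪ {α (⋃₀ {q ∈ P | q ⊂ p})})

namespace RegularFamily

variable {α : Set A → A} {P P' : Set (Set A)} {p q : Set A}

theorem induction_on (hP : RegularFamily α P) {C : Set A → Prop}
    (h : ∀ p ∈ P, (∀ q ∈ P, q ⊂ p → C q) → C p) : ∀ p ∈ P, C p := by
  by_contra! hbad
  obtain ⟨p, ⟨hp, hCp⟩, hmin⟩ := hP.2.1 {p ∈ P | ¬ C p} (sep_subset _ _) hbad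
  exact hCp (h p hp fun q hq hqp => by_contra fun hCq => hqp.not_subset (hmin q ⟨hq, hCq⟩))

theorem eq_of_setOf_ssubset_eq (hP : RegularFamily α P) (hP' : RegularFamily α P')
    (hp : p ∈ P) (hq : q ∈ P') (h : {x ∈ P | x ⊂ p} = {x ∈ P' | x ⊂ q}) : p = q := by
  have empty_mem {P : Set (Set A)} {p : Set A} (hP : RegularFamily α P) (hp : p.Nonempty) :
      ∅ ∈ {x ∈ P | x ⊂ p} := ⟨hP.2.2.1, empty_ssubset.2 hp⟩
  rcases p.eq_empty_or_nonempty with rfl | hpne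
  · refine (q.eq_empty_or_nonempty.resolve_right fun hqne => ?_).symm
    simpa [← h] using empty_mem hP' hqne
  rcases q.eq_empty_or_nonempty with rfl | hqne
  · simpa [h] using empty_mem hP hpne
  rw [hP.2.2.2 p hp hpne, hP'.2.2.2 q hq hqne, h]

theorem eq_of_mem_of_forall_notMem (hP : RegularFamily α P) (hp : p ∈ P) {a : A} (ha : a ∈ p)
    (hmin : ∀ q ∈ P, q ⊂ p → a ∉ q) : a = α (⋃₀ {q ∈ P | q ⊂ p}) := by
  rw [hP.2.2.2 p hp ⟨a, ha⟩] at ha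
  rcases ha with ⟨q, ⟨hq, hqp⟩, haq⟩ | ha
  · exact absurd haq (hmin q hq hqp)
  · exact ha

theorem singleton_empty : RegularFamily α {∅} := by
  refine ⟨?_, ?_, rfl, ?_⟩
  · rintro p rfl q rfl
    exact Or.inl subset_rfl
  · rintro γ hγ ⟨x, hx⟩
    exact ⟨x, hx, fun y hy => by rw [hγ hx, hγ hy]⟩
  · rintro p rfl hp
    exact absurd rfl hp.ne_empty

end RegularFamily

def Coherent (P P' : Set (Set A)) (p q : Set A) : Prop :=
  (p ⊆ q ∨ q ⊆ p) ∧ (p ⊂ q → p ∈ P') ∧ (q ⊂ p → q ∈ P)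

namespace Coherent

variable {α : Set A → A} {P P' : Set (Set A)} {p p' q : Set A}

theorem symm (h : Coherent P P' p q) : Coherent P' P q p :=
  ⟨h.1.symm, h.2.2, h.2.1⟩

theorem refl (P P' : Set (Set A)) (p : Set A) : Coherent P P' p p :=
  ⟨Or.inl subset_rfl, fun h => (ssubset_irrefl p h).elim, fun h => (ssubset_irrefl p h).elim⟩

theorem mem_and_ssubset_of_not_subset (h : Coherent P P' p q) (hqp : ¬ q ⊆ p) :
    p ∈ P' ∧ p ⊂ q :=
  have hpq : p ⊂ q := ⟨h.1.resolve_right hqp, hqp⟩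
  ⟨h.2.1 hpq, hpq⟩

theorem of_ssubset_of_subset (hp' : p' ∈ P) (hp'p : p' ⊂ p) (hqp' : q ⊆ p')
    (h : Coherent P P' p' q) : Coherent P P' p q :=
  ⟨Or.inr (hqp'.trans hp'p.subset),
    fun hpq => (ssubset_irrefl p (hpq.trans_subset (hqp'.trans hp'p.subset))).elim,
    fun _ => hqp'.ssubset_or_eq.elim h.2.2 (· ▸ hp')⟩

theorem of_forall_ssubset (hP : RegularFamily α P) (hP' : RegularFamily α P')
    (hp : p ∈ P) (hq : q ∈ P')
    (hpred : ∀ p' ∈ P, p' ⊂ p → Coherent P P' p' q)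
    (hqred : ∀ q' ∈ P', q' ⊂ q → Coherent P P' p q') : Coherent P P' p q := by
  by_cases hc : ∃ p' ∈ P, p' ⊂ p ∧ q ⊆ p'
  · obtain ⟨p', hp', hp'p, hqp'⟩ := hc
    exact of_ssubset_of_subset hp' hp'p hqp' (hpred p' hp' hp'p)
  by_cases hc' : ∃ q' ∈ P', q' ⊂ q ∧ p ⊆ q'
  · obtain ⟨q', hq', hq'q, hpq'⟩ := hc'
    exact (of_ssubset_of_subset hq' hq'q hpq' (hqred q' hq' hq'q).symm).symm
  push Not at hc hc'
  suffices p = q from this ▸ refl P P' p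
  refine hP.eq_of_setOf_ssubset_eq hP' hp hq (Set.ext fun x => ⟨?_, ?_⟩)
  · rintro ⟨hx, hxp⟩
    exact (hpred x hx hxp).mem_and_ssubset_of_not_subset (hc x hx hxp)
  · rintro ⟨hx, hxq⟩
    exact (hqred x hx hxq).symm.mem_and_ssubset_of_not_subset (hc' x hx hxq)

end Coherent

namespace RegularFamily

variable {α : Set A → A} {P P' : Set (Set A)} {p q : Set A}

theorem coherent (hP : RegularFamily α P) (hP' : RegularFamily α P') :
    ∀ p ∈ P, ∀ q ∈ P', Coherent P P' p q :=
  hP.induction_on fun _ hp ihp => hP'.induction_on fun q hq ihq =>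
    Coherent.of_forall_ssubset hP hP' hp hq (fun p' hp' hp'p => ihp p' hp' hp'p q hq) ihq

theorem mem_of_ssubset (hP : RegularFamily α P) (hP' : RegularFamily α P')
    (hp : p ∈ P) (hq : q ∈ P') (hqp : q ⊂ p) : q ∈ P :=
  (hP.coherent hP' p hp q hq).2.2 hqp

theorem sUnion {F : Set (Set (Set A))} (hF : ∀ P ∈ F, RegularFamily α P) (hne : F.Nonempty) :
    RegularFamily α (⋃₀ F) := by
  have mem_of_ssubset' {P : Set (Set A)} (hPF : P ∈ F) {p x : Set A} (hp : p ∈ P)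
      (hx : x ∈ ⋃₀ F) (hxp : x ⊂ p) : x ∈ P := by
    obtain ⟨P', hP'F, hxP'⟩ := hx
    exact (hF P hPF).mem_of_ssubset (hF P' hP'F) hp hxP' hxp
  refine ⟨?_, ?_, ?_, ?_⟩
  · rintro p ⟨P, hPF, hp⟩ q ⟨P', hP'F, hq⟩
    exact ((hF P hPF).coherent (hF P' hP'F) p hp q hq).1
  · rintro γ hγ ⟨p, hpγ⟩
    obtain ⟨P, hPF, hp⟩ := hγ hpγ
    have hsub : {x ∈ γ | x ⊆ p} ⊆ P := fun x ⟨hxγ, hxp⟩ =>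
      hxp.ssubset_or_eq.elim (mem_of_ssubset' hPF hp (hγ hxγ)) (· ▸ hp)
    obtain ⟨m, ⟨hmγ, hmp⟩, hmin⟩ := (hF P hPF).2.1 _ hsub ⟨p, hpγ, subset_rfl⟩
    refine ⟨m, hmγ, fun x hxγ => ?_⟩
    obtain ⟨P', hP'F, hx⟩ := hγ hxγ
    rcases (hF P' hP'F).coherent (hF P hPF) x hx p hp |>.1 with hxp | hpx
    · exact hmin x ⟨hxγ, hxp⟩
    · exact hmp.trans hpx
  · obtain ⟨P, hPF⟩ := hne
    exact ⟨P, hPF, (hF P hPF).2.2.1⟩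
  · rintro p ⟨P, hPF, hp⟩ hpne
    have hpred : {x ∈ ⋃₀ F | x ⊂ p} = {x ∈ P | x ⊂ p} := Set.ext fun x =>
      ⟨fun ⟨hx, hxp⟩ => ⟨mem_of_ssubset' hPF hp hx hxp, hxp⟩,
        fun ⟨hx, hxp⟩ => ⟨⟨P, hPF, hx⟩, hxp⟩⟩
    rw [hpred]
    exact (hF P hPF).2.2.2 p hp hpne

theorem setOf_exists_mem : RegularFamily α {p | ∃ P, RegularFamily α P ∧ p ∈ P} :=
  sUnion (F := {P | RegularFamily α P}) (fun _ hP => hP) ⟨{∅}, singleton_empty⟩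

end RegularFamily

theorem induced_relation_well_orders_general
    (α : Set A → A)
    (Q : Set (Set A)) (hQdef : Q = {p : Set A | ∃ P : Set (Set A), RegularFamily α P ∧ p ∈ P})
    (r : A → Set A)
    (hr : ∀ a : A, r a ∈ Q ∧ a ∈ r a ∧ ∀ q ∈ Q, a ∈ q → r a ⊆ q) :
    IsLinearOrder A (fun a b => r a ⊆ r b) ∧
      ∀ S : Set A, S.Nonempty → ∃ m ∈ S, ∀ x ∈ S, r m ⊆ r x := by
  have hQ : RegularFamily α Q := hQdef ▸ RegularFamily.setOf_exists_mem
  have hnew (a : A) : a = α (⋃₀ {q ∈ Q | q ⊂ r a}) :=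
    hQ.eq_of_mem_of_forall_notMem (hr a).1 (hr a).2.1 fun q hq hqr haq =>
      hqr.not_subset ((hr a).2.2 q hq haq)
  refine ⟨{ refl := fun _ => subset_rfl
            trans := fun _ _ _ => Subset.trans
            antisymm := fun a b hab hba => ?_
            total := fun a b => hQ.1 _ (hr a).1 _ (hr b).1 }, fun S hS => ?_⟩
  · rw [hnew a, hnew b, hab.antisymm hba]
  · obtain ⟨_, ⟨m, hm, rfl⟩, hmin⟩ :=
      hQ.2.1 (r '' S) (image_subset_iff.2 fun x _ => (hr x).1) (hS.image r)
    exact ⟨m, hm, fun x hx => hmin _ (mem_image_of_mem r hx)⟩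

theorem induced_relation_well_orders
    (φ : Set A → A) (hφ : ∀ X : Set A, X.Nonempty → φ X ∈ X)
    (α : Set A → A) (hα : ∀ X : Set A, α X = φ Xᶜ)
    (Q : Set (Set A)) (hQdef : Q = {p : Set A | ∃ P : Set (Set A), RegularFamily α P ∧ p ∈ P})
    (r : A → Set A)
    (hr : ∀ a : A, r a ∈ Q ∧ a ∈ r a ∧ ∀ q ∈ Q, a ∈ q → r a ⊆ q) :
    IsLinearOrder A (fun a b => r a ⊆ r b) ∧
      ∀ S : Set A, S.Nonempty → ∃ m ∈ S, ∀ x ∈ S, r m ⊆ r x :=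
  induced_relation_well_orders_general α Q hQdef r hr
end

section
/- If Q is the union of all regular families of subsets of A and Z = ⋃Q ≠ A, then Q ∪ {Z ∪ {α(Z)}} is a regular family strictly containing Q — a contradiction; hence ⋃Q = A. -/
open Set

variable {A : Type*}

/-!
Two regular families are comparable member by member: at a least point of disagreement both
members would have the same strict predecessors, hence would be equal by the successor condition.
Since `α X ∉ X`, a member of one regular family lying strictly below a member of another already
belongs to the other. Hence the union `Q` of all regular families is itself regular, and when
`⋃₀ Q ≠ univ` the successor `⋃₀ Q ∪ {α (⋃₀ Q)}` can be put on top of it, which contradicts the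
maximality of `Q`.
-/

theorem Set.eq_union_singleton_of_subset_of_not_subset {s t : Set A} {a : A} (hts : t ⊆ s)
    (hst : s ⊆ t ∪ {a}) (hnot : ¬ s ⊆ t) : s = t ∪ {a} := by
  obtain ⟨x, hxs, hxt⟩ := not_subset.1 hnot
  have hxa : x = a := (hst hxs).resolve_left hxt
  exact hst.antisymm (union_subset hts (singleton_subset_iff.2 (hxa ▸ hxs)))

/-- The set `p₁` of the successor condition. -/
def sUnionBelow (P : Set (Set A)) (p : Set A) : Set A :=
  ⋃₀ {q ∈ P | q ⊂ p}

theorem subset_sUnionBelow {P : Set (Set A)} {p q : Set A} (hq : q ∈ P) (hqp : q ⊂ p) :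
    q ⊆ sUnionBelow P p :=
  subset_sUnion_of_mem ⟨hq, hqp⟩

theorem sUnionBelow_subset_of_forall {P : Set (Set A)} {p y : Set A}
    (h : ∀ q ∈ P, q ⊂ p → q ⊆ y) : sUnionBelow P p ⊆ y :=
  sUnion_subset fun q hq => h q hq.1 hq.2

theorem sUnionBelow_subset (P : Set (Set A)) (p : Set A) : sUnionBelow P p ⊆ p :=
  sUnionBelow_subset_of_forall fun _ _ hqp => hqp.1

namespace RegularFamily

variable {α : Set A → A} {P P' : Set (Set A)}

theorem total (hP : RegularFamily α P) {p q : Set A} (hp : p ∈ P) (hq : q ∈ P) :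
    p ⊆ q ∨ q ⊆ p :=
  hP.1 p hp q hq

theorem exists_least (hP : RegularFamily α P) {γ : Set (Set A)} (hγ : γ ⊆ P)
    (hne : γ.Nonempty) : ∃ m ∈ γ, ∀ x ∈ γ, m ⊆ x :=
  hP.2.1 γ hγ hne

theorem empty_mem (hP : RegularFamily α P) : ∅ ∈ P :=
  hP.2.2.1

theorem eq_succ (hP : RegularFamily α P) {p : Set A} (hp : p ∈ P) (hne : p.Nonempty) :
    p = sUnionBelow P p ∪ {α (sUnionBelow P p)} :=
  hP.2.2.2 p hp hne

theorem subset_sUnionBelow_or_eq (hP : RegularFamily α P) {p y : Set A} (hp : p ∈ P)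
    (hne : p.Nonempty) (hyp : y ⊆ p) (hcomp : ∀ q ∈ P, q ⊂ p → q ⊆ y ∨ y ⊆ q) :
    y ⊆ sUnionBelow P p ∨ y = p := by
  by_cases hy : y ⊆ sUnionBelow P p
  · exact Or.inl hy
  have hbelow : sUnionBelow P p ⊆ y := sUnionBelow_subset_of_forall fun q hq hqp =>
    (hcomp q hq hqp).resolve_right fun hyq => hy (hyq.trans (subset_sUnionBelow hq hqp))
  have hsucc := hP.eq_succ hp hne
  exact Or.inr ((eq_union_singleton_of_subset_of_not_subset hbelow (hsucc ▸ hyp) hy).trans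
    hsucc.symm)

theorem subset_or_subset_of_mem (hP : RegularFamily α P) (hP' : RegularFamily α P')
    {p q : Set A} (hp : p ∈ P) (hq : q ∈ P') : p ⊆ q ∨ q ⊆ p := by
  by_contra! hpq
  obtain ⟨p₀, ⟨hp₀, q', hq', hp₀q'⟩, hp₀min⟩ :=
    hP.exists_least (sep_subset P fun x => ∃ y ∈ P', ¬ x ⊆ y ∧ ¬ y ⊆ x) ⟨p, hp, q, hq, hpq⟩
  obtain ⟨q₀, ⟨hq₀, hp₀q₀, hq₀p₀⟩, hq₀min⟩ :=
    hP'.exists_least (sep_subset P' fun y => ¬ p₀ ⊆ y ∧ ¬ y ⊆ p₀) ⟨q', hq', hp₀q'⟩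
  have hcompP : ∀ s ∈ P, s ⊂ p₀ → ∀ y ∈ P', s ⊆ y ∨ y ⊆ s := fun s hs hsp y hy => by
    by_contra! h
    exact hsp.2 (hp₀min s ⟨hs, y, hy, h⟩)
  have hcompP' : ∀ y ∈ P', y ⊂ q₀ → y ⊆ p₀ := fun y hy hyq => by
    by_contra h
    exact hyq.2 (hq₀min y ⟨hy, fun hpy => hp₀q₀ (hpy.trans hyq.1), h⟩)
  have hp₀ne : p₀.Nonempty := nonempty_iff_ne_empty.2 (by rintro rfl; exact hp₀q₀ (empty_subset _))
  have hq₀ne : q₀.Nonempty := nonempty_iff_ne_empty.2 (by rintro rfl; exact hq₀p₀ (empty_subset _))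
  have hle : sUnionBelow P' q₀ ⊆ sUnionBelow P p₀ := sUnionBelow_subset_of_forall fun y hy hyq =>
    (hP.subset_sUnionBelow_or_eq hp₀ hp₀ne (hcompP' y hy hyq) fun s hs hsp =>
      hcompP s hs hsp y hy).resolve_right (by rintro rfl; exact hp₀q₀ hyq.1)
  have hge : sUnionBelow P p₀ ⊆ sUnionBelow P' q₀ := sUnionBelow_subset_of_forall fun s hs hsp =>
    have hsq₀ : s ⊆ q₀ := (hcompP s hs hsp q₀ hq₀).resolve_right fun h => hq₀p₀ (h.trans hsp.1)
    (hP'.subset_sUnionBelow_or_eq hq₀ hq₀ne hsq₀ fun y hy _ =>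
      (hcompP s hs hsp y hy).symm).resolve_right (by rintro rfl; exact hq₀p₀ hsp.1)
  apply hp₀q₀
  rw [hP.eq_succ hp₀ hp₀ne, hP'.eq_succ hq₀ hq₀ne, hle.antisymm hge]

theorem mem_of_ssubset_s11 (hfresh : ∀ X : Set A, X ≠ univ → α X ∉ X) (hP : RegularFamily α P)
    (hP' : RegularFamily α P') {r p : Set A} (hr : r ∈ P') (hp : p ∈ P) (hrp : r ⊂ p) :
    r ∈ P := by
  by_contra hrP
  obtain ⟨r₀, ⟨hr₀, ⟨p', hp', hr₀p'⟩, hr₀P⟩, hr₀min⟩ :=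
    hP'.exists_least (sep_subset P' fun r => (∃ p ∈ P, r ⊂ p) ∧ r ∉ P) ⟨r, hr, ⟨p, hp, hrp⟩, hrP⟩
  have hdown : ∀ q ∈ P', q ⊂ r₀ → q ∈ P := fun q hq hqr => by
    by_contra hqP
    exact hqr.2 (hr₀min q ⟨hq, ⟨p', hp', hqr.trans hr₀p'⟩, hqP⟩)
  obtain ⟨p₀, ⟨hp₀, hr₀p₀⟩, hp₀min⟩ := hP.exists_least (sep_subset P (r₀ ⊂ ·)) ⟨p', hp', hr₀p'⟩
  have hbelow : ∀ s ∈ P, s ⊂ p₀ → s ⊆ r₀ := fun s hs hsp =>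
    (hP.subset_or_subset_of_mem hP' hs hr₀).resolve_right fun hrs =>
      hsp.2 (hp₀min s ⟨hs, hrs.ssubset_of_ne (by rintro rfl; exact hr₀P hs)⟩)
  have hp₀ne : p₀.Nonempty := nonempty_of_ssubset' hr₀p₀
  have hr₀eq : r₀ = sUnionBelow P p₀ :=
    ((hP.subset_sUnionBelow_or_eq hp₀ hp₀ne hr₀p₀.1 fun s hs hsp =>
      Or.inl (hbelow s hs hsp)).resolve_right hr₀p₀.ne).antisymm
      (sUnionBelow_subset_of_forall hbelow)
  have hr₀ne : r₀.Nonempty := nonempty_iff_ne_empty.2 fun h => hr₀P (h ▸ hP.empty_mem)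
  set R := sUnionBelow P' r₀
  have hαR : α R ∉ R :=
    hfresh R ((sUnionBelow_subset P' r₀).trans_ssubset (hr₀p₀.trans_subset (subset_univ _))).ne
  have hαr₀ : α R ∈ r₀ := by
    rw [hP'.eq_succ hr₀ hr₀ne]
    exact mem_union_right _ rfl
  rw [hr₀eq] at hαr₀
  obtain ⟨s, ⟨hs, hsp₀⟩, hαs⟩ := hαr₀
  rcases hP'.subset_sUnionBelow_or_eq hr₀ hr₀ne (hbelow s hs hsp₀) fun q hq hqr =>
    hP.total (hdown q hq hqr) hs with hsR | rfl
  · exact hαR (hsR hαs)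
  · exact hr₀P hs

theorem union_succ_sUnion (hP : RegularFamily α P) (hnew : α (⋃₀ P) ∉ ⋃₀ P) :
    RegularFamily α (P ∪ {⋃₀ P ∪ {α (⋃₀ P)}}) := by
  set w := ⋃₀ P ∪ {α (⋃₀ P)}
  have hw : ∀ p ∈ P, p ⊂ w := fun p hp =>
    (subset_sUnion_of_mem hp).trans_ssubset
      (ssubset_iff_subset_not_subset.2 ⟨subset_union_left, fun h => hnew (h (Or.inr rfl))⟩)
  refine ⟨?_, ?_, Or.inl hP.empty_mem, ?_⟩
  · rintro p (hp | rfl) q (hq | rfl)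
    exacts [hP.total hp hq, Or.inl (hw p hp).1, Or.inr (hw q hq).1, Or.inl subset_rfl]
  · intro γ hγ hne
    by_cases hγP : (γ ∩ P).Nonempty
    · obtain ⟨m, ⟨hmγ, hmP⟩, hmin⟩ := hP.exists_least inter_subset_right hγP
      refine ⟨m, hmγ, fun x hx => ?_⟩
      rcases hγ hx with hxP | rfl
      exacts [hmin x ⟨hx, hxP⟩, (hw m hmP).1]
    · have hγw : γ ⊆ {w} := fun x hx => (hγ hx).resolve_left fun hxP => hγP ⟨x, hx, hxP⟩
      obtain ⟨m, hm⟩ := hne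
      exact ⟨m, hm, fun x hx => (hγw hm).trans (hγw hx).symm ▸ subset_rfl⟩
  · rintro p (hp | rfl) hne
    · have hbelow : {q ∈ P ∪ {w} | q ⊂ p} = {q ∈ P | q ⊂ p} := by
        ext q
        refine ⟨fun ⟨hq, hqp⟩ => ⟨hq.resolve_right ?_, hqp⟩, fun ⟨hq, hqp⟩ => ⟨Or.inl hq, hqp⟩⟩
        rintro rfl
        exact ssubset_irrefl _ (hqp.trans (hw p hp))
      rw [hbelow]
      exact hP.eq_succ hp hne
    · have hbelow : {q ∈ P ∪ {w} | q ⊂ w} = P := by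
        ext q
        refine ⟨fun ⟨hq, hqw⟩ => hq.resolve_right ?_, fun hq => ⟨Or.inl hq, hw q hq⟩⟩
        rintro rfl
        exact ssubset_irrefl _ hqw
      rw [hbelow]

end RegularFamily

theorem regularFamily_singleton_empty (α : Set A → A) : RegularFamily α {∅} := by
  refine ⟨?_, ?_, rfl, ?_⟩
  · rintro _ rfl _ rfl
    exact Or.inl subset_rfl
  · intro γ hγ ⟨m, hm⟩
    exact ⟨m, hm, fun x hx => (hγ hm).trans (hγ hx).symm ▸ subset_rfl⟩
  · rintro _ rfl hne
    exact absurd rfl hne.ne_empty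

/-- The family `Q` of the theorem. -/
def regularUnion (α : Set A → A) : Set (Set A) :=
  {p | ∃ P : Set (Set A), RegularFamily α P ∧ p ∈ P}

section regularUnion

variable {α : Set A → A} {P : Set (Set A)}

theorem RegularFamily.subset_regularUnion (hP : RegularFamily α P) : P ⊆ regularUnion α :=
  fun _ hp => ⟨P, hP, hp⟩

theorem sep_regularUnion_ssubset (hfresh : ∀ X : Set A, X ≠ univ → α X ∉ X)
    (hP : RegularFamily α P) {p : Set A} (hp : p ∈ P) :
    {q ∈ regularUnion α | q ⊂ p} = {q ∈ P | q ⊂ p} := by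
  ext q
  refine ⟨fun ⟨⟨P', hP', hq⟩, hqp⟩ => ⟨hP.mem_of_ssubset_s11 hfresh hP' hq hp hqp, hqp⟩,
    fun ⟨hq, hqp⟩ => ⟨hP.subset_regularUnion hq, hqp⟩⟩

theorem regularFamily_regularUnion (hfresh : ∀ X : Set A, X ≠ univ → α X ∉ X) :
    RegularFamily α (regularUnion α) := by
  refine ⟨?_, ?_, ⟨{∅}, regularFamily_singleton_empty α, rfl⟩, ?_⟩
  · rintro p ⟨P, hP, hp⟩ q ⟨P', hP', hq⟩
    exact hP.subset_or_subset_of_mem hP' hp hq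
  · rintro γ hγ ⟨x, hx⟩
    obtain ⟨P, hP, hxP⟩ := hγ hx
    obtain ⟨m, ⟨hmγ, hmP⟩, hmin⟩ := hP.exists_least inter_subset_right ⟨x, hx, hxP⟩
    refine ⟨m, hmγ, fun y hy => ?_⟩
    obtain ⟨P', hP', hyP'⟩ := hγ hy
    rcases hP'.subset_or_subset_of_mem hP hyP' hmP with hym | hmy
    · obtain rfl | hym := hym.eq_or_ssubset
      exacts [subset_rfl, hmin y ⟨hy, hP.mem_of_ssubset_s11 hfresh hP' hyP' hmP hym⟩]
    · exact hmy
  · rintro p ⟨P, hP, hp⟩ hne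
    rw [sep_regularUnion_ssubset hfresh hP hp]
    exact hP.eq_succ hp hne

end regularUnion

theorem extend_or_cover
    (φ : Set A → A) (hφ : ∀ X : Set A, X.Nonempty → φ X ∈ X)
    (α : Set A → A) (hα : ∀ X : Set A, α X = φ Xᶜ)
    (Q : Set (Set A)) (hQdef : Q = {p : Set A | ∃ P : Set (Set A), RegularFamily α P ∧ p ∈ P}) :
    (⋃₀ Q ≠ Set.univ →
      RegularFamily α (Q ∪ {(⋃₀ Q) ∪ {α (⋃₀ Q)}}) ∧
      Q ⊂ Q ∪ {(⋃₀ Q) ∪ {α (⋃₀ Q)}}) ∧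
    ⋃₀ Q = Set.univ := by
  have hfresh : ∀ X : Set A, X ≠ univ → α X ∉ X := fun X hX hmem =>
    hφ Xᶜ (nonempty_compl.2 hX) (hα X ▸ hmem)
  have hQ : RegularFamily α Q := hQdef ▸ regularFamily_regularUnion hfresh
  have hmax : ∀ P, RegularFamily α P → P ⊆ Q := fun P hP => hQdef ▸ hP.subset_regularUnion
  have hext : ⋃₀ Q ≠ univ → RegularFamily α (Q ∪ {⋃₀ Q ∪ {α (⋃₀ Q)}}) ∧
      Q ⊂ Q ∪ {⋃₀ Q ∪ {α (⋃₀ Q)}} := fun hZ => by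
    have hnew : ⋃₀ Q ∪ {α (⋃₀ Q)} ∉ Q := fun h =>
      hfresh _ hZ (subset_sUnion_of_mem h (Or.inr rfl))
    exact ⟨hQ.union_succ_sUnion (hfresh _ hZ), union_singleton ▸ ssubset_insert hnew⟩
  refine ⟨hext, by_contra fun hZ => ?_⟩
  obtain ⟨hreg, hlt⟩ := hext hZ
  exact hlt.2 (hmax _ hreg)
end
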